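/- Define the (n+1)×(n+1) diagonal matrix D_A with entries d^A_j = a₁^{n−j} a₂^{j} t^{C(j,2)+C(n−j,2)} (q^α;t)_j (q^α a₂b₂ t^{2j};t)_{n−j} / ((q^α a₂b₂ t^{j−1};t)_j (q^α a₁a₂b₁b₂ t^{n+j−1};t)_{n−j}). Then ∏_{j=0}^{n} d^A_j = (a₁a₂)^{C(n+1,2)} t^{2C(n+1,3)} ∏_{i=1}^{n} (q^α;t)_i / (q^α a₁a₂b₁b₂ t^{2n−i−1};t)_i. -/
import Mathlib

open scoped BigOperators
open Finset

/-- The c-shifted factorial (x;c)_k = (1−x)(1−cx)⋯(1−c^{k−1}x). -/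
noncomputable def qPoch (x c : ℂ) (k : ℕ) : ℂ :=
  ∏ i ∈ Finset.range k, (1 - c ^ i * x)

private lemma qPoch_zero (x c : ℂ) : qPoch x c 0 = 1 := by simp [qPoch]

private lemma choose3 (n : ℕ) : (n+1).choose 3 = (n+1)*n*(n-1)/6 := by
  rw [Nat.choose_eq_descFactorial_div_factorial]
  congr 1
  simp [Nat.descFactorial_succ]
  ring

private lemma sum_choose2 (m : ℕ) : ∑ j ∈ Finset.range m, j.choose 2 = m.choose 3 := by
  induction m with
  | zero => simp
  | succ m ih => rw [Finset.sum_range_succ, ih, Nat.choose_succ_succ' m 2, Nat.add_comm]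

private lemma prodD (x t : ℂ) (ht : t ≠ 0) (n : ℕ) :
    ∏ j ∈ range (n+1), qPoch (x * t ^ (2*j)) t (n-j)
      = ∏ j ∈ range (n+1), qPoch (x * t ^ ((j:ℤ)-1)) t j := by
  simp only [qPoch]
  rw [Finset.prod_sigma', Finset.prod_sigma']
  refine Finset.prod_bij' (fun p _ => ⟨p.1 + p.2 + 1, p.1⟩)
    (fun p _ => ⟨p.2, p.1 - 1 - p.2⟩) ?_ ?_ ?_ ?_ ?_
  · rintro ⟨j, i⟩ h
    simp only [mem_sigma, mem_range] at h ⊢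
    omega
  · rintro ⟨j, i⟩ h
    simp only [mem_sigma, mem_range] at h ⊢
    omega
  · rintro ⟨j, i⟩ h
    simp only [mem_sigma, mem_range] at h
    simp only [Sigma.mk.inj_iff, heq_eq_eq]
    exact ⟨trivial, by omega⟩
  · rintro ⟨j, i⟩ h
    simp only [mem_sigma, mem_range] at h
    simp only [Sigma.mk.inj_iff, heq_eq_eq]
    exact ⟨by omega, trivial⟩
  · rintro ⟨j, i⟩ h
    simp only [mem_sigma, mem_range] at h
    simp only []
    have h1 : ((j + i + 1 : ℕ) : ℤ) - 1 = ((j + i : ℕ) : ℤ) := by push_cast; ring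
    rw [h1, zpow_natCast]
    ring

private lemma prodE (y t : ℂ) (n : ℕ) :
    ∏ j ∈ range (n+1), qPoch (y * t ^ ((n:ℤ) + j - 1)) t (n-j)
      = ∏ i ∈ range n, qPoch (y * t ^ (2*n - (i+1) - 1)) t (i+1) := by
  rw [prod_range_succ]
  have h0 : qPoch (y * t ^ ((n:ℤ) + n - 1)) t (n - n) = 1 := by
    simp [qPoch, Nat.sub_self]
  rw [h0, mul_one, ← Finset.prod_range_reflect]
  refine Finset.prod_congr rfl fun i hi => ?_
  rw [mem_range] at hi
  have e1 : n - (n - 1 - i) = i + 1 := by omega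
  have e2 : (n:ℤ) + ((n - 1 - i : ℕ) : ℤ) - 1 = ((2*n - (i+1) - 1 : ℕ) : ℤ) := by omega
  rw [e1, e2, zpow_natCast]

/-- The determinant of the coefficient matrix A: product of the diagonal entries of its
Gauss decomposition. Here qa plays the role of q^α. -/
theorem det_A_matrix (n : ℕ) (qa a₁ a₂ b₁ b₂ t : ℂ)
    (hqa : qa ≠ 0) (ha₁ : a₁ ≠ 0) (ha₂ : a₂ ≠ 0) (hb₁ : b₁ ≠ 0) (hb₂ : b₂ ≠ 0) (ht : t ≠ 0)
    (hd1 : ∀ j ≤ n, qPoch (qa * a₂ * b₂ * t ^ ((j : ℤ) - 1)) t j ≠ 0)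
    (hd2 : ∀ j ≤ n, qPoch (qa * a₁ * a₂ * b₁ * b₂ * t ^ ((n : ℤ) + j - 1)) t (n - j) ≠ 0) :
    (∏ j ∈ Finset.range (n + 1),
        a₁ ^ (n - j) * a₂ ^ j * t ^ (j * (j - 1) / 2 + (n - j) * (n - j - 1) / 2) *
          qPoch qa t j * qPoch (qa * a₂ * b₂ * t ^ (2 * j)) t (n - j) /
            (qPoch (qa * a₂ * b₂ * t ^ ((j : ℤ) - 1)) t j *
              qPoch (qa * a₁ * a₂ * b₁ * b₂ * t ^ ((n : ℤ) + j - 1)) t (n - j))) =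
      (a₁ * a₂) ^ (n * (n + 1) / 2) * t ^ (2 * ((n + 1) * n * (n - 1) / 6)) *
        ∏ i ∈ Finset.range n,
          qPoch qa t (i + 1) / qPoch (qa * a₁ * a₂ * b₁ * b₂ * t ^ (2 * n - (i + 1) - 1)) t (i + 1) := by
  -- split all products
  simp only [Finset.prod_div_distrib, Finset.prod_mul_distrib]
  -- the two x-products cancel, the y-products match
  rw [prodD (qa * a₂ * b₂) t ht n, prodE (qa * a₁ * a₂ * b₁ * b₂) t n]
  -- powers of a₁, a₂
  rw [Finset.prod_pow_eq_pow_sum, Finset.prod_pow_eq_pow_sum, Finset.prod_pow_eq_pow_sum]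
  -- qa products match
  have hqaprod : ∏ j ∈ Finset.range (n+1), qPoch qa t j
      = ∏ i ∈ Finset.range n, qPoch qa t (i+1) := by
    rw [Finset.prod_range_succ', qPoch_zero, mul_one]
  rw [hqaprod]
  -- exponent sums
  have hs1 : ∑ j ∈ Finset.range (n+1), (n - j) = n * (n+1) / 2 := by
    rw [← Finset.sum_range_reflect]
    have : ∀ j ∈ Finset.range (n+1), n - (n + 1 - 1 - j) = j := fun j hj => by
      rw [Finset.mem_range] at hj; omega
    rw [Finset.sum_congr rfl this, Finset.sum_range_id]
    congr 1
    simp [Nat.mul_comm]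
  have hs2 : ∑ j ∈ Finset.range (n+1), j = n * (n+1) / 2 := by
    rw [Finset.sum_range_id]
    congr 1
    simp [Nat.mul_comm]
  have hs3 : ∑ j ∈ Finset.range (n+1), (j * (j-1) / 2 + (n-j) * (n-j-1) / 2)
      = 2 * ((n+1) * n * (n-1) / 6) := by
    have h2 : ∀ j : ℕ, j * (j-1) / 2 = j.choose 2 := fun j => (Nat.choose_two_right j).symm
    simp only [Finset.sum_add_distrib, h2]
    have hr : ∑ j ∈ Finset.range (n+1), (n - j).choose 2
        = ∑ j ∈ Finset.range (n+1), j.choose 2 := by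
      rw [← Finset.sum_range_reflect]
      refine Finset.sum_congr rfl fun j hj => ?_
      rw [Finset.mem_range] at hj
      congr 1
      omega
    rw [hr, sum_choose2, choose3]
    omega
  rw [hs1, hs2, hs3, mul_pow]
  -- final algebra
  have hP1 : (∏ j ∈ Finset.range (n+1), qPoch (qa * a₂ * b₂ * t ^ ((j:ℤ) - 1)) t j) ≠ 0 :=
    Finset.prod_ne_zero_iff.mpr fun j hj => hd1 j (by rw [Finset.mem_range] at hj; omega)
  have hP2 : (∏ i ∈ Finset.range n,
      qPoch (qa * a₁ * a₂ * b₁ * b₂ * t ^ (2 * n - (i+1) - 1)) t (i+1)) ≠ 0 := by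
    rw [← prodE (qa * a₁ * a₂ * b₁ * b₂) t n]
    exact Finset.prod_ne_zero_iff.mpr fun j hj => hd2 j (by rw [Finset.mem_range] at hj; omega)
  field_simp
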